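/- Let K ⊆ ℝⁿ be a compact convex set containing a ball B of radius r > 0 centered at o, and suppose the set S = ∂B ∩ ∂K is contained in an open half-space {x : ⟨x − o, u⟩ > 0} for some unit vector u. Then B is not an inscribed ball of maximal radius: there exists ε > 0 and a point o' = o − εu such that the ball of radius r centered at o' is contained in the interior of K, hence r(K) > r. -/

import Mathlib

/-!
The sphere `∂B` touches `∂K` only on the side facing `u`, so the closed cap
`T = ∂B ∩ {⟪x - o, u⟫ ≤ 0}` is a compact subset of `int K` and has a `δ`-neighbourhood
inside `int K`. After shifting `B` by `ε < δ` in direction `-u`, every point of the new ball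
outside `B` has `⟪x - o, u⟫ < 0`, so its radial projection onto `∂B` lies in `T`, within
distance `ε` of it. The shifted ball lies in the open set `int K`, so it can be enlarged
inside `K`.
-/

open scoped RealInnerProductSpace

/-- The inradius of a set. -/
noncomputable def inradius {n : ℕ} (K : Set (EuclideanSpace ℝ (Fin n))) : ℝ :=
  sSup {r : ℝ | ∃ c, Metric.closedBall c r ⊆ K}

open Metric

section Radii

variable {E : Type*} [NormedAddCommGroup E] [NormedSpace ℝ E]

lemma bddAbove_radii_of_isBounded [Nontrivial E] {K : Set E} (hK : Bornology.IsBounded K) :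
    BddAbove {r : ℝ | ∃ c, closedBall c r ⊆ K} := by
  refine ⟨diam K, ?_⟩
  rintro s ⟨c, hc⟩
  rcases le_or_gt s 0 with hs | hs
  · exact hs.trans diam_nonneg
  obtain ⟨x, hx⟩ := exists_norm_eq E hs.le
  have hxc : c + x ∈ closedBall c s := by simp [hx]
  calc s = dist (c + x) c := by simp [hx]
    _ ≤ diam K := dist_le_diam_of_mem hK (hc hxc) (hc (mem_closedBall_self hs.le))

lemma norm_div_norm_smul_and_norm_sub {r : ℝ} {v : E} (hr : 0 ≤ r) (hrv : r ≤ ‖v‖) :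
    ‖(r / ‖v‖) • v‖ = r ∧ ‖v - (r / ‖v‖) • v‖ = ‖v‖ - r := by
  rcases eq_or_ne v 0 with rfl | hv
  · simp [le_antisymm (by simpa using hrv) hr]
  have hv : 0 < ‖v‖ := norm_pos_iff.2 hv
  have ht1 : r / ‖v‖ ≤ 1 := (div_le_one hv).2 hrv
  have hsub : v - (r / ‖v‖) • v = (1 - r / ‖v‖) • v := by rw [sub_smul, one_smul]
  rw [hsub, norm_smul, norm_smul, Real.norm_of_nonneg (div_nonneg hr hv.le),
    Real.norm_of_nonneg (sub_nonneg.2 ht1)]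
  constructor <;> field_simp

end Radii

lemma inner_neg_of_norm_add_smul_le {E : Type*} [NormedAddCommGroup E] [InnerProductSpace ℝ E]
    {u v : E} {ε : ℝ} (hu : u ≠ 0) (hε : 0 < ε) (h : ‖v + ε • u‖ ≤ ‖v‖) : ⟪v, u⟫ < 0 := by
  have hsq : ‖v + ε • u‖ ^ 2 = ‖v‖ ^ 2 + 2 * ε * ⟪v, u⟫ + ε ^ 2 * ‖u‖ ^ 2 := by
    rw [norm_add_sq_real, real_inner_smul_right, norm_smul, Real.norm_of_nonneg hε.le]
    ring
  have hle : ‖v + ε • u‖ ^ 2 ≤ ‖v‖ ^ 2 := pow_le_pow_left₀ (norm_nonneg _) h 2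
  have hu2 : 0 < ε ^ 2 * ‖u‖ ^ 2 := by positivity
  nlinarith

lemma exists_closedBall_sub_smul_subset {E : Type*} [NormedAddCommGroup E]
    [InnerProductSpace ℝ E] [ProperSpace E] {U : Set E} (hU : IsOpen U) {o u : E} {r : ℝ}
    (hu : ‖u‖ = 1) (hball : ball o r ⊆ U) (hcap : sphere o r ∩ {x | ⟪x - o, u⟫ ≤ 0} ⊆ U) :
    ∃ ε > (0 : ℝ), closedBall (o - ε • u) r ⊆ U := by
  have hcap_compact : IsCompact (sphere o r ∩ {x | ⟪x - o, u⟫ ≤ 0}) :=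
    (isCompact_sphere o r).inter_right (isClosed_le (by fun_prop) continuous_const)
  obtain ⟨δ, hδ, hthick⟩ := hcap_compact.exists_thickening_subset_open hU hcap
  refine ⟨δ / 2, by positivity, fun x hx => ?_⟩
  rw [mem_closedBall, dist_eq_norm, sub_sub_eq_add_sub, add_sub_right_comm] at hx
  rcases lt_or_ge ‖x - o‖ r with hlt | hge
  · exact hball (by rwa [mem_ball, dist_eq_norm])
  have hinner : ⟪x - o, u⟫ < 0 :=
    inner_neg_of_norm_add_smul_le (norm_ne_zero_iff.1 (by simp [hu])) (by positivity)
      (hx.trans hge)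
  have hr : 0 ≤ r := (norm_nonneg _).trans hx
  obtain ⟨hnorm, hdist⟩ := norm_div_norm_smul_and_norm_sub hr hge
  set t := r / ‖x - o‖
  have hnear : ‖x - o‖ - r < δ := by
    have := norm_sub_le (x - o + (δ / 2) • u) ((δ / 2) • u)
    rw [add_sub_cancel_right, norm_smul, hu, Real.norm_of_nonneg (by positivity)] at this
    linarith
  refine hthick (mem_thickening_iff.2 ⟨o + t • (x - o), ⟨?_, ?_⟩, ?_⟩)
  · simpa [dist_eq_norm] using hnorm
  · simpa [real_inner_smul_left] using
      mul_nonpos_of_nonneg_of_nonpos (div_nonneg hr (norm_nonneg _)) hinner.le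
  · rwa [dist_eq_norm, sub_add_eq_sub_sub, hdist]

lemma lt_inradius_of_closedBall_subset_interior {n : ℕ}
    [Nontrivial (EuclideanSpace ℝ (Fin n))] {K : Set (EuclideanSpace ℝ (Fin n))}
    (hK : Bornology.IsBounded K) {c : EuclideanSpace ℝ (Fin n)} {r : ℝ} (hr : 0 ≤ r)
    (h : closedBall c r ⊆ interior K) : r < inradius K := by
  obtain ⟨δ, hδ, hthick⟩ := (isCompact_closedBall c r).exists_cthickening_subset_open
    isOpen_interior h
  rw [cthickening_closedBall hδ.le hr] at hthick
  calc r < δ + r := by linarith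
    _ ≤ inradius K := le_csSup (bddAbove_radii_of_isBounded hK)
        ⟨c, hthick.trans interior_subset⟩

theorem stmt_19_general {n : ℕ} (K : Set (EuclideanSpace ℝ (Fin n)))
    (hKc : IsCompact K)
    (o u : EuclideanSpace ℝ (Fin n)) (r : ℝ) (hr : 0 < r)
    (hB : Metric.closedBall o r ⊆ K) (hu : ‖u‖ = 1)
    (hS : frontier (Metric.closedBall o r) ∩ frontier K ⊆
      {x : EuclideanSpace ℝ (Fin n) | 0 < ⟪x - o, u⟫}) :
    (∃ ε > (0:ℝ), Metric.closedBall (o - ε • u) r ⊆ interior K) ∧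
      r < inradius K := by
  have hball : ball o r ⊆ interior K := by
    rw [← interior_closedBall o hr.ne']
    exact interior_mono hB
  have hcap : sphere o r ∩ {x | ⟪x - o, u⟫ ≤ 0} ⊆ interior K := by
    rintro y ⟨hy, hyu : ⟪y - o, u⟫ ≤ 0⟩
    by_contra hyint
    have hyK : y ∈ frontier K :=
      hKc.isClosed.frontier_eq ▸ ⟨hB (sphere_subset_closedBall hy), hyint⟩
    exact (hS ⟨frontier_closedBall o hr.ne' ▸ hy, hyK⟩ : 0 < ⟪y - o, u⟫).not_ge hyu
  obtain ⟨ε, hε, hshift⟩ := exists_closedBall_sub_smul_subset isOpen_interior hu hball hcap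
  have : Nontrivial (EuclideanSpace ℝ (Fin n)) :=
    nontrivial_of_ne u 0 (ne_zero_of_norm_ne_zero (by simp [hu]))
  exact ⟨⟨ε, hε, hshift⟩,
    lt_inradius_of_closedBall_subset_interior hKc.isBounded hr.le hshift⟩

theorem stmt_19 {n : ℕ} (K : Set (EuclideanSpace ℝ (Fin n)))
    (hKc : IsCompact K) (hKconv : Convex ℝ K) (hKint : (interior K).Nonempty)
    (o u : EuclideanSpace ℝ (Fin n)) (r : ℝ) (hr : 0 < r)
    (hB : Metric.closedBall o r ⊆ K) (hu : ‖u‖ = 1)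
    (hS : frontier (Metric.closedBall o r) ∩ frontier K ⊆
      {x : EuclideanSpace ℝ (Fin n) | 0 < ⟪x - o, u⟫}) :
    (∃ ε > (0:ℝ), Metric.closedBall (o - ε • u) r ⊆ interior K) ∧
      r < inradius K :=
  stmt_19_general K hKc o u r hr hB hu hS
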